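/- Let F be a symmetric function on the positive cone Γ₊ ⊂ ℝⁿ, positively homogeneous of degree 1, with ∂F/∂κᵢ > 0, and suppose F satisfies the concavity inequality F^{ij,kl}η_{ij}η_{kl} ≤ F^{-1}(F^{ij}η_{ij})² − F^{ik}h̃^{jl}η_{ij}η_{kl} for all symmetric matrices η (where F is evaluated at a positive definite symmetric matrix (h_{ij}) with inverse (h̃^{ij})). Then F is concave on the cone of positive definite symmetric matrices. -/

import Mathlib

open Finset Matrix

attribute [local instance] Matrix.normedAddCommGroup Matrix.normedSpace

section Aux
variable {n : ℕ}


lemma myHerm_smul {A : Matrix (Fin n) (Fin n) ℝ} (hA : A.IsHermitian) (c : ℝ) :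
    (c • A).IsHermitian := by
  unfold Matrix.IsHermitian at *
  rw [conjTranspose_smul, hA]
  simp

lemma myPosDef_smul {A : Matrix (Fin n) (Fin n) ℝ} (hA : A.PosDef) {c : ℝ} (hc : 0 < c) :
    (c • A).PosDef := by
  refine Matrix.PosDef.of_dotProduct_mulVec_pos (myHerm_smul hA.1 c) fun x hx => ?_
  have := hA.dotProduct_mulVec_pos hx
  simp only [smul_mulVec, dotProduct_smul, smul_eq_mul]
  exact mul_pos hc this

lemma myIsSymm_of_posDef {A : Matrix (Fin n) (Fin n) ℝ} (hA : A.PosDef) : A.IsSymm := by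
  have := hA.1
  rwa [Matrix.IsHermitian, conjTranspose_eq_transpose_of_trivial] at this

lemma myConvexS : Convex ℝ {A : Matrix (Fin n) (Fin n) ℝ | A.PosDef ∧ A.IsSymm} := by
  rintro A ⟨hA, hAs⟩ B ⟨hB, hBs⟩ a b ha hb hab
  refine ⟨?_, ?_⟩
  · rcases eq_or_lt_of_le ha with h | h
    · have hb1 : b = 1 := by linarith
      simp [← h, hb1, hB]
    rcases eq_or_lt_of_le hb with h' | h'
    · have ha1 : a = 1 := by linarith
      simp [← h', ha1, hA]
    · exact (myPosDef_smul hA h).add (myPosDef_smul hB h')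
  · simp only [Matrix.IsSymm, transpose_add, transpose_smul, hAs.eq, hBs.eq]

variable {n : ℕ} {F : Matrix (Fin n) (Fin n) ℝ → ℝ}

lemma myDiff [Nonempty (Fin n)]
    (hmono : ∀ (A : Matrix (Fin n) (Fin n) ℝ), A.PosDef → A.IsSymm →
      ∀ i, 0 < fderiv ℝ F A (Matrix.single i i 1))
    {A : Matrix (Fin n) (Fin n) ℝ} (hA : A.PosDef) (hAs : A.IsSymm) :
    DifferentiableAt ℝ F A := by
  by_contra h
  have := hmono A hA hAs (Classical.arbitrary _)
  rw [fderiv_zero_of_not_differentiableAt h] at this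
  simp at this

lemma myEuler
    (hhom : ∀ (A : Matrix (Fin n) (Fin n) ℝ), A.PosDef → A.IsSymm →
      ∀ t : ℝ, 0 < t → F (t • A) = t * F A)
    {A : Matrix (Fin n) (Fin n) ℝ} (hA : A.PosDef) (hAs : A.IsSymm)
    (hF : DifferentiableAt ℝ F A) :
    fderiv ℝ F A A = F A := by
  have h1 : HasDerivAt (fun t : ℝ => t • A) A 1 := by
    have := (hasDerivAt_id (1:ℝ)).smul_const A
    simp only [id_eq, one_smul] at this
    exact this
  have hFA : HasFDerivAt F (fderiv ℝ F A) ((fun t : ℝ => t • A) 1) := by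
    simpa using hF.hasFDerivAt
  have hd : HasDerivAt (fun t : ℝ => F (t • A)) (fderiv ℝ F A A) 1 :=
    hFA.comp_hasDerivAt 1 h1
  have h2 : (fun t : ℝ => F (t • A)) =ᶠ[nhds 1] fun t => t * F A := by
    filter_upwards [Ioi_mem_nhds (zero_lt_one (α := ℝ))] with t ht
    exact hhom A hA hAs t ht
  have h3 : HasDerivAt (fun t : ℝ => t * F A) (F A) 1 := by
    simpa using (hasDerivAt_id (1:ℝ)).mul_const (F A)
  have hd' : HasDerivAt (fun t : ℝ => F (t • A)) (F A) 1 := h3.congr_of_eventuallyEq h2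
  exact hd.unique hd'

/-- two functions agreeing on `[0,∞)` with derivatives at `0` have equal derivatives. -/
lemma myOneSided {f g : ℝ → ℝ} {a b : ℝ} (hf : HasDerivAt f a 0) (hg : HasDerivAt g b 0)
    (hfg : ∀ t : ℝ, 0 ≤ t → f t = g t) : a = b := by
  have h1 : HasDerivWithinAt g a (Set.Ici 0) 0 :=
    (hf.hasDerivWithinAt (s := Set.Ici 0)).congr
      (fun x hx => (hfg x hx).symm) (hfg 0 le_rfl).symm
  have h2 : HasDerivWithinAt g b (Set.Ici 0) 0 := hg.hasDerivWithinAt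
  exact (h1.derivWithin (uniqueDiffOn_Ici 0 0 Set.self_mem_Ici)).symm.trans
    (h2.derivWithin (uniqueDiffOn_Ici 0 0 Set.self_mem_Ici))

variable {n : ℕ}

lemma myIsSymm_of_posDef' {A : Matrix (Fin n) (Fin n) ℝ} (hA : A.PosDef) : A.IsSymm := by
  have := hA.1
  rwa [Matrix.IsHermitian, conjTranspose_eq_transpose_of_trivial] at this

lemma myVmV_symm (v : Fin n → ℝ) : (vecMulVec v v).IsSymm := by
  ext i j; simp [vecMulVec_apply, Matrix.transpose_apply, mul_comm]

lemma myVmV_posSemidef (v : Fin n → ℝ) : (vecMulVec v v).PosSemidef := by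
  refine Matrix.PosSemidef.of_dotProduct_mulVec_nonneg ?_ ?_
  · rw [Matrix.IsHermitian, conjTranspose_eq_transpose_of_trivial]
    exact myVmV_symm v
  · intro x
    have h : (vecMulVec v v) *ᵥ x = (v ⬝ᵥ x) • v := by
      ext i
      simp only [Matrix.mulVec, vecMulVec_apply, dotProduct, Pi.smul_apply, smul_eq_mul,
        Finset.mul_sum]
      rw [Finset.sum_mul]
      exact Finset.sum_congr rfl fun k _ => by ring
    rw [h]
    simp only [star_trivial, dotProduct_smul, smul_eq_mul]
    have : x ⬝ᵥ v = v ⬝ᵥ x := dotProduct_comm x v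
    rw [this]
    exact mul_self_nonneg _

lemma myVmV_mul (u : Fin n → ℝ) :
    (vecMulVec u u) * (vecMulVec u u) = (u ⬝ᵥ u) • vecMulVec u u := by
  ext i j
  simp only [Matrix.mul_apply, vecMulVec_apply, Matrix.smul_apply, smul_eq_mul, dotProduct]
  rw [Finset.sum_mul]
  congr 1
  ext k
  ring

lemma myVmV_smul (c : ℝ) (u : Fin n → ℝ) :
    vecMulVec (c • u) (c • u) = (c * c) • vecMulVec u u := by
  ext i j; simp [vecMulVec_apply]; ring

lemma myPosDef_conj {A P : Matrix (Fin n) (Fin n) ℝ}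
    (hA : A.PosDef) (hP : P ∈ Matrix.orthogonalGroup (Fin n) ℝ) :
    (Pᵀ * A * P).PosDef := by
  have hPP : Pᵀ * P = 1 := by
    have := (Matrix.mem_orthogonalGroup_iff' (Fin n) ℝ).mp hP
    exact this
  refine Matrix.PosDef.of_dotProduct_mulVec_pos ?_ ?_
  · rw [Matrix.IsHermitian, conjTranspose_eq_transpose_of_trivial]
    rw [Matrix.transpose_mul, Matrix.transpose_mul, transpose_transpose,
      (myIsSymm_of_posDef' hA).eq, Matrix.mul_assoc]
  · intro x hx
    have hPx : P *ᵥ x ≠ 0 := by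
      intro h
      have : Pᵀ *ᵥ (P *ᵥ x) = x := by
        rw [Matrix.mulVec_mulVec, hPP, Matrix.one_mulVec]
      rw [h, Matrix.mulVec_zero] at this
      exact hx this.symm
    have := hA.dotProduct_mulVec_pos hPx
    simp only [star_trivial] at this ⊢
    have hrw : x ⬝ᵥ (Pᵀ * A * P) *ᵥ x = (P *ᵥ x) ⬝ᵥ A *ᵥ (P *ᵥ x) := by
      rw [← Matrix.mulVec_mulVec, ← Matrix.mulVec_mulVec, Matrix.dotProduct_mulVec x Pᵀ,
        Matrix.vecMul_transpose]
    rw [hrw]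
    exact this

variable {n : ℕ}

lemma myUmulV (u v : Fin n → ℝ) (x : Fin n → ℝ) :
    (vecMulVec u v) *ᵥ x = (v ⬝ᵥ x) • u := by
  ext i
  simp only [Matrix.mulVec, vecMulVec_apply, dotProduct, Pi.smul_apply, smul_eq_mul,
    Finset.mul_sum]
  rw [Finset.sum_mul]
  exact Finset.sum_congr rfl fun k _ => by ring

/-- Householder: there is an orthogonal `P` with `P *ᵥ v = e i₀` and `P` symmetric. -/
lemma myHouseholder {v : Fin n → ℝ} (hv : v ⬝ᵥ v = 1) (i₀ : Fin n) :
    ∃ P ∈ Matrix.orthogonalGroup (Fin n) ℝ, Pᵀ = P ∧ P *ᵥ v = Pi.single i₀ 1 := by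
  set e : Fin n → ℝ := Pi.single i₀ 1 with he
  have hee : e ⬝ᵥ e = 1 := by simp [he, dotProduct, Pi.single_apply]
  by_cases h0 : v - e = 0
  · refine ⟨1, Submonoid.one_mem _, by simp, ?_⟩
    have : v = e := by rwa [sub_eq_zero] at h0
    simp [this]
  set u : Fin n → ℝ := v - e with hu
  have hc0 : (0:ℝ) < u ⬝ᵥ u := by
    have hnn : (0:ℝ) ≤ u ⬝ᵥ u := by
      simp only [dotProduct]
      exact Finset.sum_nonneg fun i _ => mul_self_nonneg _
    rcases lt_or_eq_of_le hnn with h | h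
    · exact h
    · exact absurd (dotProduct_self_eq_zero.mp h.symm) h0
  set c : ℝ := u ⬝ᵥ u with hcc
  have hkey : c = 2 * (u ⬝ᵥ v) := by
    have h1 : u ⬝ᵥ u - 2 * (u ⬝ᵥ v) = e ⬝ᵥ e - v ⬝ᵥ v := by
      simp only [hu, sub_dotProduct, dotProduct_sub]
      have := dotProduct_comm v e
      linarith [dotProduct_comm v e]
    rw [hee, hv] at h1
    simp only [hcc]
    linarith
  set k : ℝ := 2 / c with hk
  set U : Matrix (Fin n) (Fin n) ℝ := vecMulVec u u with hU
  set P : Matrix (Fin n) (Fin n) ℝ := 1 - k • U with hP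
  have hUsymm : Uᵀ = U := by
    ext i j; simp [hU, vecMulVec_apply, Matrix.transpose_apply, mul_comm]
  have hPsymm : Pᵀ = P := by
    rw [hP, Matrix.transpose_sub, Matrix.transpose_one, Matrix.transpose_smul, hUsymm]
  have hUU : U * U = c • U := by
    ext i j
    simp only [hU, Matrix.mul_apply, vecMulVec_apply, Matrix.smul_apply, smul_eq_mul, hcc,
      dotProduct]
    rw [Finset.sum_mul]
    congr 1
    ext l
    ring
  have hkc : k * c = 2 := by rw [hk]; field_simp
  have hPP : P * P = 1 := by
    have h2 : k * (k * c) = k + k := by rw [hkc]; ring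
    simp only [hP, Matrix.sub_mul, Matrix.mul_sub, Matrix.one_mul, Matrix.mul_one,
      Matrix.smul_mul, Matrix.mul_smul, hUU, smul_smul, hkc]
    module
  have hPv : P *ᵥ v = e := by
    have hUv : U *ᵥ v = (u ⬝ᵥ v) • u := myUmulV u u v
    have hku : k * (u ⬝ᵥ v) = 1 := by
      have : u ⬝ᵥ v = c / 2 := by rw [hkey]; ring
      rw [this, hk]
      field_simp
    rw [hP, Matrix.sub_mulVec, Matrix.one_mulVec, Matrix.smul_mulVec, hUv, smul_smul,
      hku, one_smul, hu]
    abel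
  exact ⟨P, (Matrix.mem_orthogonalGroup_iff (Fin n) ℝ).mpr (by
      rwa [hPsymm]),
    hPsymm, hPv⟩

variable {n : ℕ}

lemma myConjVmV (P : Matrix (Fin n) (Fin n) ℝ) (v : Fin n → ℝ) :
    Pᵀ * vecMulVec v v * P = vecMulVec (Pᵀ *ᵥ v) (Pᵀ *ᵥ v) := by
  ext i j
  simp only [Matrix.mul_apply, vecMulVec_apply, Matrix.transpose_apply, Matrix.mulVec,
    dotProduct, Finset.sum_mul, Finset.mul_sum]
  refine Finset.sum_congr rfl fun k _ => Finset.sum_congr rfl fun l _ => by ring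

lemma mySingleVmV (i₀ : Fin n) :
    vecMulVec (Pi.single i₀ (1:ℝ)) (Pi.single i₀ 1) = Matrix.single i₀ i₀ 1 := by
  ext i j
  simp only [vecMulVec_apply, Pi.single_apply, Matrix.single, Matrix.of_apply]
  split_ifs <;> simp_all <;> aesop

section Deriv

lemma myPosSemidef_smul {A : Matrix (Fin n) (Fin n) ℝ} (hA : A.PosSemidef) {c : ℝ} (hc : 0 ≤ c) :
    (c • A).PosSemidef := by
  refine Matrix.PosSemidef.of_dotProduct_mulVec_nonneg (myHerm_smul hA.1 c) fun x => ?_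
  have := hA.dotProduct_mulVec_nonneg x
  simp only [smul_mulVec, dotProduct_smul, smul_eq_mul, star_trivial] at this ⊢
  exact mul_nonneg hc this

variable {F : Matrix (Fin n) (Fin n) ℝ → ℝ}

/-- conjugation invariance of the derivative in PSD directions -/
lemma myConjDeriv
    (hsymm : ∀ (A : Matrix (Fin n) (Fin n) ℝ), A.PosDef → A.IsSymm →
      ∀ P ∈ Matrix.orthogonalGroup (Fin n) ℝ, F (Pᵀ * A * P) = F A)
    {A P ξ : Matrix (Fin n) (Fin n) ℝ} (hA : A.PosDef)
    (hP : P ∈ Matrix.orthogonalGroup (Fin n) ℝ) (hξ : ξ.PosSemidef)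
    (hdA : DifferentiableAt ℝ F A) (hdA' : DifferentiableAt ℝ F (Pᵀ * A * P)) :
    fderiv ℝ F A ξ = fderiv ℝ F (Pᵀ * A * P) (Pᵀ * ξ * P) := by
  set f : ℝ → ℝ := fun t => F (A + t • ξ) with hf
  set g : ℝ → ℝ := fun t => F ((Pᵀ * A * P) + t • (Pᵀ * ξ * P)) with hg
  have hc1 : HasDerivAt (fun t : ℝ => A + t • ξ) ξ 0 := by
    have := ((hasDerivAt_id (0:ℝ)).smul_const ξ).const_add A
    simp only [id_eq, one_smul] at this
    exact this
  have hc2 : HasDerivAt (fun t : ℝ => (Pᵀ * A * P) + t • (Pᵀ * ξ * P)) (Pᵀ * ξ * P) 0 := by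
    have := ((hasDerivAt_id (0:ℝ)).smul_const (Pᵀ * ξ * P)).const_add (Pᵀ * A * P)
    simp only [id_eq, one_smul] at this
    exact this
  have hdf : HasDerivAt f (fderiv ℝ F A ξ) 0 := by
    have : HasFDerivAt F (fderiv ℝ F A) ((fun t : ℝ => A + t • ξ) 0) := by
      simpa using hdA.hasFDerivAt
    exact this.comp_hasDerivAt 0 hc1
  have hdg : HasDerivAt g (fderiv ℝ F (Pᵀ * A * P) (Pᵀ * ξ * P)) 0 := by
    have : HasFDerivAt F (fderiv ℝ F (Pᵀ * A * P))
        ((fun t : ℝ => (Pᵀ * A * P) + t • (Pᵀ * ξ * P)) 0) := by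
      simpa using hdA'.hasFDerivAt
    exact this.comp_hasDerivAt 0 hc2
  refine myOneSided hdf hdg fun t ht => ?_
  have hmem : (A + t • ξ).PosDef := hA.add_posSemidef (myPosSemidef_smul hξ ht)
  have hexp : Pᵀ * (A + t • ξ) * P = (Pᵀ * A * P) + t • (Pᵀ * ξ * P) := by
    rw [Matrix.mul_add, Matrix.add_mul, Matrix.mul_smul, Matrix.smul_mul]
  have := hsymm (A + t • ξ) hmem (myIsSymm_of_posDef hmem) P hP
  rw [hexp] at this
  exact this.symm

lemma myRankOnePos
    (hsymm : ∀ (A : Matrix (Fin n) (Fin n) ℝ), A.PosDef → A.IsSymm →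
      ∀ P ∈ Matrix.orthogonalGroup (Fin n) ℝ, F (Pᵀ * A * P) = F A)
    (hmono : ∀ (A : Matrix (Fin n) (Fin n) ℝ), A.PosDef → A.IsSymm →
      ∀ i, 0 < fderiv ℝ F A (Matrix.single i i 1))
    {A : Matrix (Fin n) (Fin n) ℝ} (hA : A.PosDef)
    {v : Fin n → ℝ} (hv : v ⬝ᵥ v = 1) :
    0 < fderiv ℝ F A (vecMulVec v v) := by
  have hne : Nonempty (Fin n) := by
    by_contra h
    rw [not_nonempty_iff] at h
    rw [dotProduct] at hv
    simp at hv
  obtain ⟨i₀⟩ := hne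
  have hv' : (1:Matrix (Fin n) (Fin n) ℝ)ᵀ *ᵥ v = v := by simp
  obtain ⟨P, hP, hPsymm, hPv⟩ := myHouseholder hv i₀
  have hPorth : P ∈ Matrix.orthogonalGroup (Fin n) ℝ := hP
  have hA' : (Pᵀ * A * P).PosDef := myPosDef_conj hA hP
  haveI : Nonempty (Fin n) := ⟨i₀⟩
  have hdA : DifferentiableAt ℝ F A := myDiff hmono hA (myIsSymm_of_posDef hA)
  have hdA' : DifferentiableAt ℝ F (Pᵀ * A * P) := myDiff hmono hA' (myIsSymm_of_posDef hA')
  have h1 := myConjDeriv hsymm hA hP (myVmV_posSemidef v) hdA hdA'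
  rw [myConjVmV] at h1
  have hPtv : Pᵀ *ᵥ v = Pi.single i₀ 1 := by rw [hPsymm, hPv]
  rw [hPtv, mySingleVmV] at h1
  rw [h1]
  exact hmono _ hA' (myIsSymm_of_posDef hA') i₀

lemma myPSDNonneg
    (hsymm : ∀ (A : Matrix (Fin n) (Fin n) ℝ), A.PosDef → A.IsSymm →
      ∀ P ∈ Matrix.orthogonalGroup (Fin n) ℝ, F (Pᵀ * A * P) = F A)
    (hmono : ∀ (A : Matrix (Fin n) (Fin n) ℝ), A.PosDef → A.IsSymm →
      ∀ i, 0 < fderiv ℝ F A (Matrix.single i i 1))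
    {A : Matrix (Fin n) (Fin n) ℝ} (hA : A.PosDef)
    {ξ : Matrix (Fin n) (Fin n) ℝ} (hξ : ξ.PosSemidef) :
    0 ≤ fderiv ℝ F A ξ ∧ (ξ ≠ 0 → 0 < fderiv ℝ F A ξ) := by
  obtain ⟨B, hB⟩ : ∃ B : Matrix (Fin n) (Fin n) ℝ, ξ = Bᴴ * B := by
    open scoped MatrixOrder in
    obtain ⟨B, hB⟩ := CStarAlgebra.nonneg_iff_eq_star_mul_self.mp hξ.nonneg
    exact ⟨B, hB⟩
  have hBT : Bᴴ = Bᵀ := conjTranspose_eq_transpose_of_trivial B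
  have hsum : ξ = ∑ k, vecMulVec (B k) (B k) := by
    rw [hB, hBT]
    ext i j
    simp only [Matrix.mul_apply, Matrix.transpose_apply, Finset.sum_apply, vecMulVec_apply,
      Matrix.sum_apply]
  have hterm : ∀ w : Fin n → ℝ, 0 ≤ fderiv ℝ F A (vecMulVec w w) ∧
      (w ≠ 0 → 0 < fderiv ℝ F A (vecMulVec w w)) := by
    intro w
    by_cases hw : w = 0
    · subst hw
      have h0 : vecMulVec (0 : Fin n → ℝ) (0 : Fin n → ℝ) = 0 := by
        ext i j; simp [vecMulVec_apply]
      refine ⟨by rw [h0, map_zero], fun h => absurd rfl h⟩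
    · have hnn : (0:ℝ) ≤ w ⬝ᵥ w := by
        simp only [dotProduct]
        exact Finset.sum_nonneg fun i _ => mul_self_nonneg _
      have hc : (0:ℝ) < w ⬝ᵥ w := by
        rcases lt_or_eq_of_le hnn with h | h
        · exact h
        · exact absurd (dotProduct_self_eq_zero.mp h.symm) hw
      set s : ℝ := Real.sqrt (w ⬝ᵥ w) with hs
      have hs0 : 0 < s := Real.sqrt_pos.mpr hc
      have hss : s * s = w ⬝ᵥ w := Real.mul_self_sqrt hc.le
      set v : Fin n → ℝ := s⁻¹ • w with hvdef
      have hvv : v ⬝ᵥ v = 1 := by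
        simp only [hvdef, smul_dotProduct, dotProduct_smul, smul_eq_mul]
        rw [← hss]
        field_simp
      have hscale : vecMulVec w w = (s * s) • vecMulVec v v := by
        rw [hvdef, myVmV_smul, smul_smul]
        have hsne : s ≠ 0 := hs0.ne'
        field_simp
        rw [one_smul]
      have hpos : 0 < fderiv ℝ F A (vecMulVec w w) := by
        rw [hscale, ContinuousLinearMap.map_smul, smul_eq_mul]
        exact mul_pos (mul_pos hs0 hs0) (myRankOnePos hsymm hmono hA hvv)
      exact ⟨hpos.le, fun _ => hpos⟩
  constructor
  · rw [hsum, map_sum]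
    exact Finset.sum_nonneg fun k _ => (hterm (B k)).1
  · intro hξ0
    have hBk : ∃ k, B k ≠ 0 := by
      by_contra h
      push_neg at h
      apply hξ0
      rw [hsum]
      refine Finset.sum_eq_zero fun k _ => ?_
      rw [h k]
      ext i j; simp [vecMulVec_apply]
    obtain ⟨k₀, hk₀⟩ := hBk
    rw [hsum, map_sum]
    exact Finset.sum_pos' (fun k _ => (hterm (B k)).1) ⟨k₀, Finset.mem_univ _, (hterm (B k₀)).2 hk₀⟩

lemma myConjQuad (P A : Matrix (Fin n) (Fin n) ℝ) (x : Fin n → ℝ) :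
    x ⬝ᵥ (Pᵀ * A * P) *ᵥ x = (P *ᵥ x) ⬝ᵥ A *ᵥ (P *ᵥ x) := by
  rw [← Matrix.mulVec_mulVec, ← Matrix.mulVec_mulVec, Matrix.dotProduct_mulVec x Pᵀ,
    Matrix.vecMul_transpose]

lemma myQuadPSD {A ξ : Matrix (Fin n) (Fin n) ℝ} (hA : A.PosDef) (hξs : ξ.IsSymm) :
    (ξ * A⁻¹ * ξ).PosSemidef := by
  have h := (hA.inv.posSemidef).conjTranspose_mul_mul_same ξ
  rwa [conjTranspose_eq_transpose_of_trivial, hξs.eq] at h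

lemma myQuadNeZero {A ξ : Matrix (Fin n) (Fin n) ℝ} (hA : A.PosDef) (hξs : ξ.IsSymm)
    (hξ : ξ ≠ 0) : ξ * A⁻¹ * ξ ≠ 0 := by
  intro h0
  have hx : ∃ x : Fin n → ℝ, ξ *ᵥ x ≠ 0 := by
    by_contra h
    push_neg at h
    apply hξ
    ext i j
    have := congrFun (h (Pi.single j 1)) i
    simpa [Matrix.mulVec_single] using this
  obtain ⟨x, hx⟩ := hx
  have hq : x ⬝ᵥ (ξ * A⁻¹ * ξ) *ᵥ x = (ξ *ᵥ x) ⬝ᵥ A⁻¹ *ᵥ (ξ *ᵥ x) := by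
    have hrw2 : ξ * A⁻¹ * ξ = ξᵀ * A⁻¹ * ξ := by rw [hξs.eq]
    rw [hrw2]
    exact myConjQuad ξ A⁻¹ x
  have hpos := hA.inv.dotProduct_mulVec_pos hx
  simp only [star_trivial] at hpos
  rw [← hq, h0] at hpos
  simp at hpos

section CS
variable {F : Matrix (Fin n) (Fin n) ℝ → ℝ}

lemma myCS
    (hsymm : ∀ (A : Matrix (Fin n) (Fin n) ℝ), A.PosDef → A.IsSymm →
      ∀ P ∈ Matrix.orthogonalGroup (Fin n) ℝ, F (Pᵀ * A * P) = F A)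
    (hhom : ∀ (A : Matrix (Fin n) (Fin n) ℝ), A.PosDef → A.IsSymm →
      ∀ t : ℝ, 0 < t → F (t • A) = t * F A)
    (hpos : ∀ (A : Matrix (Fin n) (Fin n) ℝ), A.PosDef → A.IsSymm → 0 < F A)
    (hmono : ∀ (A : Matrix (Fin n) (Fin n) ℝ), A.PosDef → A.IsSymm →
      ∀ i, 0 < fderiv ℝ F A (Matrix.single i i 1))
    {A : Matrix (Fin n) (Fin n) ℝ} (hA : A.PosDef)
    (hdA : DifferentiableAt ℝ F A)
    {η : Matrix (Fin n) (Fin n) ℝ} (hηs : η.IsSymm) :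
    (fderiv ℝ F A η) ^ 2 ≤ F A * fderiv ℝ F A (η * A⁻¹ * η) ∧
    ((fderiv ℝ F A η) ^ 2 = F A * fderiv ℝ F A (η * A⁻¹ * η) →
      F A • η = (fderiv ℝ F A η) • A) := by
  have hAs : A.IsSymm := myIsSymm_of_posDef hA
  have hFA : 0 < F A := hpos A hA hAs
  have hdet : IsUnit A.det := (Matrix.isUnit_iff_isUnit_det A).mp hA.isUnit
  have hinv1 : A * A⁻¹ = 1 := Matrix.mul_nonsing_inv A hdet
  have hinv2 : A⁻¹ * A = 1 := Matrix.nonsing_inv_mul A hdet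
  set L := fderiv ℝ F A with hL
  set c : ℝ := L η with hc
  set ξ : Matrix (Fin n) (Fin n) ℝ := F A • η - c • A with hξdef
  have hξs : ξ.IsSymm := by
    simp only [Matrix.IsSymm, hξdef, transpose_sub, transpose_smul, hηs.eq, hAs.eq]
  have hexp : ξ * A⁻¹ * ξ = (F A * F A) • (η * A⁻¹ * η)
      - (2 * (F A * c)) • η + (c * c) • A := by
    have e1 : η * A⁻¹ * A = η := by rw [Matrix.mul_assoc, hinv2, Matrix.mul_one]
    have e2 : A * A⁻¹ * η = η := by rw [hinv1, Matrix.one_mul]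
    have e3 : A * A⁻¹ * A = A := by rw [hinv1, Matrix.one_mul]
    rw [hξdef]
    simp only [Matrix.sub_mul, Matrix.mul_sub, Matrix.smul_mul, Matrix.mul_smul, smul_smul]
    rw [e1, e2, e3]
    module
  have hQξ : 0 ≤ L (ξ * A⁻¹ * ξ) := (myPSDNonneg hsymm hmono hA (myQuadPSD hA hξs)).1
  have hEuler : L A = F A := myEuler hhom hA hAs hdA
  have hval : L (ξ * A⁻¹ * ξ) = (F A * F A) * L (η * A⁻¹ * η) - 2 * (F A * c) * c
      + c * c * F A := by
    rw [hexp, L.map_add, L.map_sub, L.map_smul, L.map_smul, L.map_smul]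
    simp only [smul_eq_mul, hEuler, ← hc]
    try ring
  have hfact : L (ξ * A⁻¹ * ξ) = F A * (F A * L (η * A⁻¹ * η) - c ^ 2) := by
    rw [hval]; ring
  constructor
  · nlinarith [hQξ, hfact, hFA]
  · intro heq
    have hQ0 : L (ξ * A⁻¹ * ξ) = 0 := by rw [hfact, ← heq]; ring
    by_contra hne
    have hξne : ξ ≠ 0 := fun h => hne (by rw [hξdef] at h; rwa [sub_eq_zero] at h)
    have := (myPSDNonneg hsymm hmono hA (myQuadPSD hA hξs)).2 (myQuadNeZero hA hξs hξne)
    rw [hQ0] at this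
    exact lt_irrefl _ this
end CS
end Deriv

lemma myLinExpand (L : Matrix (Fin n) (Fin n) ℝ →L[ℝ] ℝ) (S : Matrix (Fin n) (Fin n) ℝ) :
    L S = ∑ i, ∑ k, S i k * L (Matrix.single i k 1) := by
  conv_lhs => rw [matrix_eq_sum_single S]
  rw [map_sum]
  refine Finset.sum_congr rfl fun i _ => ?_
  rw [map_sum]
  refine Finset.sum_congr rfl fun k _ => ?_
  have : Matrix.single i k (S i k) = S i k • Matrix.single i k 1 := by
    rw [Matrix.smul_single, smul_eq_mul, mul_one]
  rw [this, L.map_smul, smul_eq_mul]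

lemma myQuartic (L : Matrix (Fin n) (Fin n) ℝ →L[ℝ] ℝ)
    {η : Matrix (Fin n) (Fin n) ℝ} (hηs : η.IsSymm) (M : Matrix (Fin n) (Fin n) ℝ) :
    ∑ i, ∑ j, ∑ k, ∑ l,
      L (Matrix.single i k 1) * M j l * η i j * η k l = L (η * M * η) := by
  rw [myLinExpand L (η * M * η)]
  refine Finset.sum_congr rfl fun i _ => ?_
  rw [Finset.sum_comm]
  refine Finset.sum_congr rfl fun k _ => ?_
  have hentry : (η * M * η) i k = ∑ j, ∑ l, η i j * M j l * η l k := by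
    simp only [Matrix.mul_apply, Finset.sum_mul]
    rw [Finset.sum_comm]
  rw [hentry, Finset.sum_mul]
  refine Finset.sum_congr rfl fun j _ => ?_
  rw [Finset.sum_mul]
  refine Finset.sum_congr rfl fun l _ => ?_
  have hsym : η l k = η k l := by rw [← hηs.apply]
  rw [hsym]
  ring

end Aux

/-- A symmetric (orthogonally invariant) curvature function `F`, positively homogeneous of
degree 1, with positive first derivatives, satisfying the concavity inequality
`F^{ij,kl} η_{ij} η_{kl} ≤ F⁻¹ (F^{ij} η_{ij})² − F^{ik} h̃^{jl} η_{ij} η_{kl}`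
for all symmetric `η` at every positive definite symmetric `h`, is concave on the cone
`𝒮₊` of positive definite symmetric matrices. -/
theorem stmt_0 (n : ℕ)
    (F : Matrix (Fin n) (Fin n) ℝ → ℝ)
    (hC2 : ContDiffOn ℝ 2 F {A | A.PosDef ∧ A.IsSymm})
    (hsymm : ∀ (A : Matrix (Fin n) (Fin n) ℝ), A.PosDef → A.IsSymm →
      ∀ P ∈ Matrix.orthogonalGroup (Fin n) ℝ, F (Pᵀ * A * P) = F A)
    (hhom : ∀ (A : Matrix (Fin n) (Fin n) ℝ), A.PosDef → A.IsSymm →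
      ∀ t : ℝ, 0 < t → F (t • A) = t * F A)
    (hpos : ∀ (A : Matrix (Fin n) (Fin n) ℝ), A.PosDef → A.IsSymm → 0 < F A)
    (hmono : ∀ (A : Matrix (Fin n) (Fin n) ℝ), A.PosDef → A.IsSymm →
      ∀ i, 0 < fderiv ℝ F A (Matrix.single i i 1))
    (hconcineq : ∀ (A : Matrix (Fin n) (Fin n) ℝ), A.PosDef → A.IsSymm →
      ∀ η : Matrix (Fin n) (Fin n) ℝ, η.IsSymm →
        fderiv ℝ (fun B => fderiv ℝ F B η) A η ≤
          (F A)⁻¹ * (fderiv ℝ F A η) ^ 2 -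
            ∑ i, ∑ j, ∑ k, ∑ l,
              fderiv ℝ F A (Matrix.single i k 1) * A⁻¹ j l * η i j * η k l) :
    ConcaveOn ℝ {A : Matrix (Fin n) (Fin n) ℝ | A.PosDef ∧ A.IsSymm} F := by
  refine ⟨myConvexS, ?_⟩
  rintro A ⟨hA, hAs⟩ B ⟨hB, hBs⟩ a b ha hb hab
  by_cases hr : ∃ r : ℝ, B = r • A
  · obtain ⟨r, rfl⟩ := hr
    rcases isEmpty_or_nonempty (Fin n) with hE | hNE
    · have h0 : ∀ (X Y : Matrix (Fin n) (Fin n) ℝ), X = Y := fun X Y => by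
        ext i j; exact hE.elim i
      rw [h0 (a • A + b • (r • A)) A, h0 (r • A) A]
      have : a • F A + b • F A = F A := by
        simp only [smul_eq_mul]
        rw [← add_mul, hab, one_mul]
      rw [this]
    · obtain ⟨i₀⟩ := hNE
      set x : Fin n → ℝ := Pi.single i₀ 1 with hx
      have hx0 : x ≠ 0 := by
        intro h
        have := congrFun h i₀
        simp [hx] at this
      have h1 := hA.dotProduct_mulVec_pos hx0
      have h2 := hB.dotProduct_mulVec_pos hx0
      simp only [star_trivial, smul_mulVec, dotProduct_smul, smul_eq_mul] at h1 h2
      have hr0 : 0 < r := by nlinarith [h1, h2]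
      have hcomb : a • A + b • (r • A) = (a + b * r) • A := by
        rw [smul_smul, ← add_smul]
      have habr : 0 < a + b * r := by
        rcases eq_or_lt_of_le hb with h | h
        · nlinarith
        · nlinarith
      rw [hcomb, hhom A hA hAs _ habr, hhom A hA hAs r hr0]
      simp only [smul_eq_mul]
      nlinarith [hab]
  · push_neg at hr
    have hη0 : B - A ≠ 0 := fun h => hr 1 (by rw [one_smul]; exact (sub_eq_zero.mp h))
    set η : Matrix (Fin n) (Fin n) ℝ := B - A with hηdef
    have hηs : η.IsSymm := by
      simp only [Matrix.IsSymm, hηdef, transpose_sub, hAs.eq, hBs.eq]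
    have hNE : Nonempty (Fin n) := by
      by_contra h
      rw [not_nonempty_iff] at h
      exact hη0 (by ext i j; exact h.elim i)
    haveI := hNE
    have hA0 : A ≠ 0 := by
      intro h
      obtain ⟨i₀⟩ := hNE
      have hx0 : (Pi.single i₀ 1 : Fin n → ℝ) ≠ 0 := by
        intro hh
        have := congrFun hh i₀
        simp at this
      have := hA.dotProduct_mulVec_pos hx0
      rw [h] at this
      simp at this
    set c : ℝ → Matrix (Fin n) (Fin n) ℝ := fun t => A + t • η with hcdef
    have hmemc : ∀ t ∈ Set.Icc (0:ℝ) 1, (c t).PosDef ∧ (c t).IsSymm := by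
      intro t ht
      have h1 : c t = (1 - t) • A + t • B := by
        show A + t • (B - A) = (1 - t) • A + t • B
        module
      rw [h1]
      exact myConvexS ⟨hA, hAs⟩ ⟨hB, hBs⟩ (by linarith [ht.2] : (0:ℝ) ≤ 1 - t) ht.1
        (by ring)
    have hdiffc : ∀ t ∈ Set.Icc (0:ℝ) 1, DifferentiableAt ℝ F (c t) := fun t ht =>
      myDiff hmono (hmemc t ht).1 (hmemc t ht).2
    have hc' : ∀ t : ℝ, HasDerivAt c η t := fun t => by
      have := ((hasDerivAt_id t).smul_const η).const_add A
      simp only [id_eq, one_smul] at this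
      exact this
    have hgd : ∀ t ∈ Set.Icc (0:ℝ) 1,
        HasDerivAt (fun s => F (c s)) (fderiv ℝ F (c t) η) t := fun t ht =>
      ((hdiffc t ht).hasFDerivAt).comp_hasDerivAt t (hc' t)
    -- the second derivative bound and junk exclusion
    have hRHS : ∀ t ∈ Set.Icc (0:ℝ) 1,
        (F (c t))⁻¹ * (fderiv ℝ F (c t) η) ^ 2 -
          fderiv ℝ F (c t) (η * (c t)⁻¹ * η) ≤ 0 := by
      intro t ht
      obtain ⟨hPD, hSym⟩ := hmemc t ht
      have hFpos := hpos (c t) hPD hSym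
      have hcs := (myCS hsymm hhom hpos hmono hPD (hdiffc t ht) hηs).1
      have h1 : (F (c t))⁻¹ * (fderiv ℝ F (c t) η) ^ 2 ≤
          fderiv ℝ F (c t) (η * (c t)⁻¹ * η) := by
        rw [inv_mul_le_iff₀ hFpos]
        linarith [hcs]
      linarith
    have hG : ∀ t ∈ Set.Icc (0:ℝ) 1,
        DifferentiableAt ℝ (fun C => fderiv ℝ F C η) (c t) := by
      intro t ht
      by_contra hnd
      obtain ⟨hPD, hSym⟩ := hmemc t ht
      have hFpos := hpos (c t) hPD hSym
      have hineq := hconcineq (c t) hPD hSym η hηs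
      rw [fderiv_zero_of_not_differentiableAt hnd] at hineq
      rw [myQuartic (fderiv ℝ F (c t)) hηs (c t)⁻¹] at hineq
      simp only [ContinuousLinearMap.zero_apply] at hineq
      have hcs := myCS hsymm hhom hpos hmono hPD (hdiffc t ht) hηs
      have heq : (fderiv ℝ F (c t) η) ^ 2 =
          F (c t) * fderiv ℝ F (c t) (η * (c t)⁻¹ * η) := by
        have h2 : F (c t) * fderiv ℝ F (c t) (η * (c t)⁻¹ * η) ≤
            (fderiv ℝ F (c t) η) ^ 2 := by
          have h3 : fderiv ℝ F (c t) (η * (c t)⁻¹ * η) ≤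
              (F (c t))⁻¹ * (fderiv ℝ F (c t) η) ^ 2 := by linarith
          have h4 := mul_le_mul_of_nonneg_left h3 hFpos.le
          rwa [← mul_assoc, mul_inv_cancel₀ hFpos.ne', one_mul] at h4
        linarith [hcs.1]
      have hξ0 := hcs.2 heq
      set p : ℝ := F (c t) with hp
      set q : ℝ := fderiv ℝ F (c t) η with hq
      have h3 : (p - q * t) • η = q • A := by
        rw [hcdef] at hξ0
        simp only [smul_add, smul_smul] at hξ0
        rw [sub_smul, hξ0, mul_comm q t]
        abel
      rcases eq_or_ne (p - q * t) 0 with hz | hz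
      · rw [hz, zero_smul] at h3
        have hq0 : q ≠ 0 := by
          intro h
          rw [h] at hz
          simp at hz
          exact hFpos.ne' hz
        rcases smul_eq_zero.mp h3.symm with h | h
        · exact hq0 h
        · exact hA0 h
      · have hηA : η = ((p - q * t)⁻¹ * q) • A := by
          rw [mul_smul, ← h3, smul_smul, inv_mul_cancel₀ hz, one_smul]
        apply hr (1 + (p - q * t)⁻¹ * q)
        rw [add_smul, one_smul, ← hηA]
        rw [hηdef]
        abel
    have hcont : ContinuousOn (fun t => F (c t)) (Set.Icc 0 1) := by
      refine hC2.continuousOn.comp ?_ ?_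
      · exact (continuous_const.add (continuous_id.smul continuous_const)).continuousOn
      · intro t ht
        exact hmemc t ht
    have hh : ∀ t ∈ Set.Icc (0:ℝ) 1,
        HasDerivAt (fun s => fderiv ℝ F (c s) η)
          (fderiv ℝ (fun C => fderiv ℝ F C η) (c t) η) t := fun t ht =>
      ((hG t ht).hasFDerivAt).comp_hasDerivAt t (hc' t)
    have hEqF : ∀ t ∈ Set.Ioo (0:ℝ) 1,
        deriv (fun s => F (c s)) =ᶠ[nhds t] fun s => fderiv ℝ F (c s) η := by
      intro t ht
      filter_upwards [Ioo_mem_nhds ht.1 ht.2] with s hs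
      exact (hgd s (Set.Ioo_subset_Icc_self hs)).deriv
    have hconc1d : ConcaveOn ℝ (Set.Icc (0:ℝ) 1) (fun t => F (c t)) := by
      refine concaveOn_of_deriv2_nonpos (convex_Icc 0 1) hcont ?_ ?_ ?_
      · rw [interior_Icc]
        exact fun t ht =>
          ((hgd t (Set.Ioo_subset_Icc_self ht)).differentiableAt).differentiableWithinAt
      · rw [interior_Icc]
        intro t ht
        have hd : DifferentiableAt ℝ (fun s => fderiv ℝ F (c s) η) t :=
          (hh t (Set.Ioo_subset_Icc_self ht)).differentiableAt
        exact (hd.congr_of_eventuallyEq (hEqF t ht)).differentiableWithinAt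
      · rw [interior_Icc]
        intro t ht
        have h2 : deriv (deriv (fun s => F (c s))) t =
            fderiv ℝ (fun C => fderiv ℝ F C η) (c t) η := by
          rw [(hEqF t ht).deriv_eq]
          exact (hh t (Set.Ioo_subset_Icc_self ht)).deriv
        have h4 : deriv^[2] (fun s => F (c s)) t = deriv (deriv (fun s => F (c s))) t := by
          simp [Function.iterate_succ, Function.iterate_zero, Function.comp]
        rw [h4, h2]
        obtain ⟨hPD, hSym⟩ := hmemc t (Set.Ioo_subset_Icc_self ht)
        have hineq := hconcineq (c t) hPD hSym η hηs
        rw [myQuartic (fderiv ℝ F (c t)) hηs (c t)⁻¹] at hineq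
        linarith [hRHS t (Set.Ioo_subset_Icc_self ht)]
    have hcomb : a • A + b • B = c b := by
      have hab' : a = 1 - b := by linarith
      rw [hab']
      show (1 - b) • A + b • B = A + b • (B - A)
      module
    have hmem0 : (0:ℝ) ∈ Set.Icc (0:ℝ) 1 := by constructor <;> norm_num
    have hmem1 : (1:ℝ) ∈ Set.Icc (0:ℝ) 1 := by constructor <;> norm_num
    have := hconc1d.2 hmem0 hmem1 ha hb hab
    simp only [smul_eq_mul, mul_zero, mul_one, zero_add] at this
    have hc0 : c 0 = A := by rw [hcdef]; simp
    have hc1 : c 1 = B := by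
      rw [hcdef]
      simp only [one_smul, hηdef]
      abel
    rw [hc0, hc1] at this
    rw [hcomb]
    simpa [smul_eq_mul] using this
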